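/- Let α be an automorphism of a finite abelian group V. Then the minimal left Engel sink 𝓛(α) of α on V is a subgroup of V. -/
import Mathlib

/-- Iterated Engel commutator `[u, _n α]` with `[u, α] = u⁻¹ u^α`. -/
def lEngelAut {G : Type} [Group G] (α : MulAut G) : G → ℕ → G
  | u, 0 => u
  | u, n + 1 => (lEngelAut α u n)⁻¹ * α (lEngelAut α u n)

/-- A left Engel sink of `α`. -/
def IsLeftEngelSinkAut {G : Type} [Group G] (α : MulAut G) (L : Set G) : Prop :=
  ∀ u : G, ∃ N : ℕ, ∀ n ≥ N, lEngelAut α u n ∈ L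

/-- The minimal left Engel sink of `α`. -/
def IsMinLeftEngelSinkAut {G : Type} [Group G] (α : MulAut G) (L : Set G) : Prop :=
  IsLeftEngelSinkAut α L ∧ ∀ L' : Set G, IsLeftEngelSinkAut α L' → L ⊆ L'

/-- The Engel map `u ↦ u⁻¹ α(u)` as an endomorphism of a commutative group. -/
def engelHom {V : Type} [CommGroup V] (α : MulAut V) : Monoid.End V where
  toFun u := u⁻¹ * α u
  map_one' := by simp
  map_mul' a b := by
    simp [map_mul, mul_comm, mul_assoc, mul_left_comm]

lemma lEngelAut_eq_pow {V : Type} [CommGroup V] (α : MulAut V) (u : V) (n : ℕ) :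
    lEngelAut α u n = (engelHom α ^ n) u := by
  induction n with
  | zero => simp [lEngelAut]
  | succ n ih =>
    rw [pow_succ']
    show (lEngelAut α u n)⁻¹ * α (lEngelAut α u n) = engelHom α ((engelHom α ^ n) u)
    rw [ih]; rfl

/-- The minimal left Engel sink of an automorphism of a finite abelian group is
a subgroup. -/
theorem stmt7 (V : Type) [CommGroup V] [Finite V] (α : MulAut V)
    (L : Set V) (hL : IsMinLeftEngelSinkAut α L) :
    ∃ H : Subgroup V, (H : Set V) = L := by
  set φ := engelHom α with hφ
  have hfin : Finite (Monoid.End V) :=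
    Finite.of_injective (fun f => (f : V → V)) DFunLike.coe_injective
  obtain ⟨a, b, hne, hab⟩ := Finite.exists_ne_map_eq_of_infinite (fun n : ℕ => φ ^ n)
  wlog hlt : a < b generalizing a b
  · exact this b a hne.symm hab.symm (by omega)
  set p := b - a with hp
  have hpp : 0 < p := by omega
  have hper : φ ^ (a + p) = φ ^ a := by
    have : a + p = b := by omega
    rw [this]; exact hab.symm
  have hm : ∀ m : ℕ, φ ^ (a + m * p) = φ ^ a := by
    intro m
    induction m with
    | zero => simp
    | succ m ih =>
      have : a + (m + 1) * p = (a + m * p) + p := by ring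
      rw [this, pow_add, ih, ← pow_add, hper]
  set W := (φ ^ a : V →* V).range with hW
  have hsink : IsLeftEngelSinkAut α (W : Set V) := by
    intro u
    refine ⟨a, fun n hn => ?_⟩
    rw [lEngelAut_eq_pow]
    have : n = a + (n - a) := by omega
    rw [this, pow_add]
    exact ⟨(φ ^ (n - a)) u, rfl⟩
  refine ⟨W, Set.Subset.antisymm ?_ (hL.2 _ hsink)⟩
  rintro w ⟨u, rfl⟩
  obtain ⟨N, hN⟩ := hL.1 u
  have hge : a + N * p ≥ N := by
    have : N * 1 ≤ N * p := Nat.mul_le_mul_left N hpp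
    omega
  have := hN (a + N * p) hge
  rwa [lEngelAut_eq_pow, hm] at this
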